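/- Compression Lemma: let R be a left-linear TRS over a signature Σ (no variable occurs more than once in any left-hand side) all of whose left-hand sides are finite terms. Then every infinitary reduction can be compressed to length at most ω: →∞ ⊆ →^{≤ω}, i.e., s →∞ t implies s →^{≤ω} t for all s, t ∈ T. -/

import Mathlib

open Relation

/-- A signature: a type of function symbols together with an arity for each symbol. -/
structure Signature where
  Sym : Type
  ar : Sym → ℕ

/-- The polynomial functor whose final coalgebra is the set of (finite and infinite)
terms over the signature `Sg` and the set `X` of variables. -/
def TermF (Sg : Signature) (X : Type) : PFunctor.{0} :=
  ⟨X ⊕ Sg.Sym, fun a => Sum.rec (fun _ => Empty) (fun f => Fin (Sg.ar f)) a⟩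

/-- The set `T` of finite and infinite terms over `Sg` and `X`, defined coinductively
(as the final coalgebra, i.e. the M-type, of `TermF Sg X`). -/
def Tm (Sg : Signature) (X : Type) : Type := PFunctor.M (TermF Sg X)

variable {Sg : Signature} {X : Type}

/-- The term consisting of a single variable. -/
def Tm.var (x : X) : Tm Sg X := PFunctor.M.mk ⟨Sum.inl x, Empty.elim⟩

/-- The term `f(t₁,…,tₙ)` with root symbol `f` and arguments `args`. -/
def Tm.node (f : Sg.Sym) (args : Fin (Sg.ar f) → Tm Sg X) : Tm Sg X :=
  PFunctor.M.mk ⟨Sum.inr f, args⟩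

/-- One step of the corecursive definition of substitution:
`Sum.inl t` means `t` still has to be substituted, `Sum.inr t` means `t` is copied. -/
def substAux (σ : X → Tm Sg X) :
    (Tm Sg X ⊕ Tm Sg X) → (TermF Sg X) (Tm Sg X ⊕ Tm Sg X) := fun s =>
  match s with
  | Sum.inl t =>
    match PFunctor.M.dest t with
    | ⟨Sum.inl x, _⟩ =>
        ⟨(PFunctor.M.dest (σ x)).1, fun b => Sum.inr ((PFunctor.M.dest (σ x)).2 b)⟩
    | ⟨Sum.inr f, k⟩ => ⟨Sum.inr f, fun b => Sum.inl (k b)⟩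
  | Sum.inr t =>
      ⟨(PFunctor.M.dest t).1, fun b => Sum.inr ((PFunctor.M.dest t).2 b)⟩

/-- Application `tσ` of a substitution `σ : X → T` to a term `t`, defined corecursively. -/
def subst (σ : X → Tm Sg X) (t : Tm Sg X) : Tm Sg X :=
  PFunctor.M.corec (substAux σ) (Sum.inl t)

/-- `Occurs x t`: the variable `x` occurs in the term `t`. -/
inductive Occurs (x : X) : Tm Sg X → Prop
  | here {t : Tm Sg X} : t = Tm.var x → Occurs x t
  | deeper {t : Tm Sg X} {f : Sg.Sym} {args : Fin (Sg.ar f) → Tm Sg X}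
      (i : Fin (Sg.ar f)) : t = Tm.node f args → Occurs x (args i) → Occurs x t

/-- A term rewriting system over `Sg` and `X`: a set of rules `ℓ → r` such that
`ℓ` is not a variable and all variables of `r` occur in `ℓ`. -/
structure TRS (Sg : Signature) (X : Type) where
  rules : Set (Tm Sg X × Tm Sg X)
  lhs_not_var : ∀ l r, (l, r) ∈ rules → ∀ x : X, l ≠ Tm.var x
  vars_lhs : ∀ l r, (l, r) ∈ rules → ∀ x : X, Occurs x r → Occurs x l

/-- Relations on terms. -/
abbrev TRel (Sg : Signature) (X : Type) := Tm Sg X → Tm Sg X → Prop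

/-- The root step relation `→ε := {(ℓσ, rσ) | ℓ → r ∈ R, σ a substitution}`. -/
def RootStep (R : TRS Sg X) : TRel Sg X := fun s t =>
  ∃ l r, (l, r) ∈ R.rules ∧ ∃ σ : X → Tm Sg X, s = subst σ l ∧ t = subst σ r

/-- `StepAt Q p s t`: a `Q`-step at position `p`, i.e. `s = C[u]`, `t = C[v]` with
`(u,v) ∈ Q` and `C` a one-hole context whose hole is at position `p`. -/
inductive StepAt (Q : TRel Sg X) : List ℕ → Tm Sg X → Tm Sg X → Prop
  | here {s t : Tm Sg X} : Q s t → StepAt Q [] s t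
  | deeper {f : Sg.Sym} {ss ts : Fin (Sg.ar f) → Tm Sg X} (i : Fin (Sg.ar f))
      {p : List ℕ} : StepAt Q p (ss i) (ts i) → (∀ j, j ≠ i → ss j = ts j) →
      StepAt Q ((i : ℕ) :: p) (Tm.node f ss) (Tm.node f ts)

/-- The one-step rewrite relation `→` of a TRS: a root step applied inside a
one-hole context. -/
def Step (R : TRS Sg X) : TRel Sg X := fun s t => ∃ p, StepAt (RootStep R) p s t

/-- The lifting `↓R` of a relation `R`:
`↓R := {(f(s₁,…,sₙ), f(t₁,…,tₙ)) | f ∈ Σ, s₁ R t₁, …, sₙ R tₙ} ∪ Id`. -/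
def liftRel (R : TRel Sg X) : TRel Sg X := fun s t =>
  s = t ∨ ∃ (f : Sg.Sym) (ss ts : Fin (Sg.ar f) → Tm Sg X),
    s = Tm.node f ss ∧ t = Tm.node f ts ∧ ∀ i, R (ss i) (ts i)

lemma liftRel_mono : Monotone (liftRel (Sg := Sg) (X := X)) := by
  intro R S h s t hst
  rcases hst with h1 | ⟨f, ss, ts, rfl, rfl, hi⟩
  · exact Or.inl h1
  · exact Or.inr ⟨f, ss, ts, rfl, rfl, fun i => h _ _ (hi i)⟩

/-- Relational composition `r ∘ s`. -/
def relComp (r s : TRel Sg X) : TRel Sg X := fun a c => ∃ b, r a b ∧ s b c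

/-- The monotone operator `S ↦ (→ε ∪ ↓R)* ∘ ↓S` (for a fixed `R`). -/
def iredInnerHom (R : TRS Sg X) (U : TRel Sg X) : TRel Sg X →o TRel Sg X where
  toFun S := relComp
    (ReflTransGen (fun s t => RootStep R s t ∨ liftRel U s t)) (liftRel S)
  monotone' := by
    intro S S' h a c hac
    rcases hac with ⟨b, h1, h2⟩
    exact ⟨b, h1, liftRel_mono h _ _ h2⟩

/-- The monotone operator `R ↦ νS.((→ε ∪ ↓R)* ∘ ↓S)`. -/
def iredHom (R : TRS Sg X) : TRel Sg X →o TRel Sg X where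
  toFun U := OrderHom.gfp (iredInnerHom R U)
  monotone' := by
    intro U V h
    apply OrderHom.gfp.monotone
    intro S a c hac
    rcases hac with ⟨b, h1, h2⟩
    refine ⟨b, ?_, h2⟩
    exact ReflTransGen.mono (fun x y hxy => hxy.imp id (fun h' => liftRel_mono h _ _ h')) _ _ h1

/-- The infinitary rewrite relation `→∞ := μR.νS.((→ε ∪ ↓R)* ∘ ↓S)`. -/
def ired (R : TRS Sg X) : TRel Sg X := OrderHom.lfp (iredHom R)

/-- The monotone operator `R' ↦ (→ε ∪ ↓R')*`. -/
def biHom (R : TRS Sg X) : TRel Sg X →o TRel Sg X where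
  toFun U := ReflTransGen (fun s t => RootStep R s t ∨ liftRel U s t)
  monotone' := by
    intro U V h a b hab
    exact ReflTransGen.mono (fun x y hxy => hxy.imp id (fun h' => liftRel_mono h _ _ h')) _ _ hab

/-- The bi-infinite rewrite relation `∞→ := νR.(→ε ∪ ↓R)*`. -/
def bired (R : TRS Sg X) : TRel Sg X := OrderHom.gfp (biHom R)

/-- The monotone operator `R' ↦ (←ε ∪ →ε ∪ ↓R')*`. -/
def ieqHom (R : TRS Sg X) : TRel Sg X →o TRel Sg X where
  toFun U := ReflTransGen (fun s t => RootStep R t s ∨ RootStep R s t ∨ liftRel U s t)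
  monotone' := by
    intro U V h a b hab
    exact ReflTransGen.mono
      (fun x y hxy => hxy.imp id (fun h' => h'.imp id (fun h'' => liftRel_mono h _ _ h''))) _ _ hab

/-- The infinitary equational reasoning relation `=∞ := νR.(←ε ∪ →ε ∪ ↓R)*`. -/
def ieq (R : TRS Sg X) : TRel Sg X := OrderHom.gfp (ieqHom R)

/-- `Agree n s t`: the terms `s` and `t` coincide up to depth `n`
(i.e. `d(s,t) ≤ 2^{-n}` for the standard metric `d`). -/
def Agree : ℕ → Tm Sg X → Tm Sg X → Prop
  | 0, _, _ => True
  | n + 1, s, t =>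
      (∃ x : X, s = Tm.var x ∧ t = Tm.var x) ∨
      ∃ (f : Sg.Sym) (ss ts : Fin (Sg.ar f) → Tm Sg X),
        s = Tm.node f ss ∧ t = Tm.node f ts ∧ ∀ i, Agree n (ss i) (ts i)

/-- `ConvTo t p l tl`: as `β` approaches the ordinal `l` from below,
`d(t β, tl)` tends to `0` and the depth `|p β|` tends to infinity. -/
def ConvTo (t : Ordinal.{0} → Tm Sg X) (p : Ordinal.{0} → List ℕ) (l : Ordinal.{0})
    (tl : Tm Sg X) : Prop :=
  (∀ n : ℕ, ∃ β₀ < l, ∀ β, β₀ ≤ β → β < l → Agree n (t β) tl) ∧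
  (∀ n : ℕ, ∃ β₀ < l, ∀ β, β₀ ≤ β → β < l → n ≤ (p β).length)

/-- A transfinite sequence of `Q`-steps `(t_β →_{p_β} t_{β+1})_{β<α}` of ordinal
length `α`, weakly continuous and with depths tending to infinity at every limit
ordinal `λ < α`. -/
structure TransSeq (Q : TRel Sg X) (α : Ordinal.{0}) where
  t : Ordinal.{0} → Tm Sg X
  pos : Ordinal.{0} → List ℕ
  step : ∀ β < α, StepAt Q (pos β) (t β) (t (β + 1))
  conv : ∀ l < α, Order.IsSuccLimit l → ConvTo t pos l (t l)

/-- A transfinite rewrite sequence is strongly convergent if its length is a successor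
ordinal (or zero), or there exists a final term to which it converges (with depths
tending to infinity) at the limit. -/
def TransSeq.StronglyConvergent {Q : TRel Sg X} {α : Ordinal.{0}} (s : TransSeq Q α) : Prop :=
  Order.IsSuccLimit α → ∃ tl, ConvTo s.t s.pos α tl

/-- `SCRed Q s t`: there is a strongly convergent transfinite sequence of `Q`-steps
from `s` to `t`. -/
def SCRed (Q : TRel Sg X) : TRel Sg X := fun a b =>
  ∃ (α : Ordinal.{0}) (s : TransSeq Q α), s.t 0 = a ∧ s.t α = b ∧
    (Order.IsSuccLimit α → ConvTo s.t s.pos α b)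

/-- The standard, ordinal-based infinitary rewrite relation `→∞_ord`:
strongly convergent transfinite rewrite sequences. -/
def iredOrd (R : TRS Sg X) : TRel Sg X := SCRed (RootStep R)

-- auxiliary facts about the term constructors
lemma node_ne_var (f : Sg.Sym) (args : Fin (Sg.ar f) → Tm Sg X) (x : X) :
    Tm.node f args ≠ Tm.var x := by
  intro h
  have h1 := congrArg (fun u => (PFunctor.M.dest u).1) h
  simp only [Tm.node, Tm.var, PFunctor.M.dest_mk] at h1
  exact Sum.inr_ne_inl h1

lemma node_inj_sym {f g : Sg.Sym} {ss : Fin (Sg.ar f) → Tm Sg X}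
    {ts : Fin (Sg.ar g) → Tm Sg X} (h : Tm.node f ss = Tm.node g ts) : f = g := by
  have h1 := congrArg (fun u => (PFunctor.M.dest u).1) h
  simp only [Tm.node, PFunctor.M.dest_mk] at h1
  exact Sum.inr.inj h1

lemma node_inj_args {f : Sg.Sym} {ss ts : Fin (Sg.ar f) → Tm Sg X}
    (h : Tm.node f ss = Tm.node f ts) : ss = ts := by
  have h' : (PFunctor.M.mk ⟨Sum.inr f, ss⟩ : Tm Sg X) = PFunctor.M.mk ⟨Sum.inr f, ts⟩ := h
  have h1 := PFunctor.M.mk_inj h'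
  injection h1 with h2 h3

lemma var_inj {x y : X} (h : (Tm.var x : Tm Sg X) = Tm.var y) : x = y := by
  have h1 := congrArg (fun u => (PFunctor.M.dest u).1) h
  simp only [Tm.var, PFunctor.M.dest_mk] at h1
  exact Sum.inl.inj h1

lemma occurs_var_iff {x y : X} : Occurs x (Tm.var y : Tm Sg X) ↔ x = y := by
  constructor
  · intro h
    cases h with
    | here h => exact (var_inj h.symm)
    | deeper i h _ => exact absurd h.symm (node_ne_var _ _ _)
  · rintro rfl
    exact Occurs.here rfl

lemma occurs_node_iff {x : X} {f : Sg.Sym} {args : Fin (Sg.ar f) → Tm Sg X} :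
    Occurs x (Tm.node f args) ↔ ∃ i, Occurs x (args i) := by
  constructor
  · intro h
    cases h with
    | here h => exact absurd h (node_ne_var _ _ _)
    | deeper i h hocc =>
      obtain rfl := node_inj_sym h
      obtain rfl := node_inj_args h
      exact ⟨i, hocc⟩
  · rintro ⟨i, h⟩
    exact Occurs.deeper i rfl h

/-- `OccursAt x p t`: the variable `x` occurs at position `p` in the term `t`. -/
inductive OccursAt (x : X) : List ℕ → Tm Sg X → Prop
  | here {t : Tm Sg X} : t = Tm.var x → OccursAt x [] t
  | deeper {t : Tm Sg X} {f : Sg.Sym} {args : Fin (Sg.ar f) → Tm Sg X}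
      (i : Fin (Sg.ar f)) {p : List ℕ} :
      t = Tm.node f args → OccursAt x p (args i) → OccursAt x ((i : ℕ) :: p) t

/-- `FiniteTm t`: the term `t` is finite (its syntax tree is well-founded). -/
inductive FiniteTm : Tm Sg X → Prop
  | var {t : Tm Sg X} (x : X) : t = Tm.var x → FiniteTm t
  | node {t : Tm Sg X} {f : Sg.Sym} {args : Fin (Sg.ar f) → Tm Sg X} :
      t = Tm.node f args → (∀ i, FiniteTm (args i)) → FiniteTm t

/-- The monotone operator `S ↦ (→)* ∘ ↓S`. -/
def oredHom (R : TRS Sg X) : TRel Sg X →o TRel Sg X where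
  toFun S := relComp (Relation.ReflTransGen (Step R)) (liftRel S)
  monotone' := by
    intro S S' h a c hac
    rcases hac with ⟨b, h1, h2⟩
    exact ⟨b, h1, liftRel_mono h _ _ h2⟩

/-- The relation `→^{≤ω} := νS.((→)* ∘ ↓S)` of reductions of length at most `ω`. -/
def ored (R : TRS Sg X) : TRel Sg X := OrderHom.gfp (oredHom R)

/-! `→^{≤ω}` is transitive when `R` is left-linear with finite left-hand sides: a reduction
`s →^{≤ω} ℓσ` into a redex can be reorganised as `s →* ℓτ` followed by `τ x →^{≤ω} σ x` for
every variable `x`, because the finitely many positions of the finite pattern `ℓ` are produced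
after finitely many steps, and linearity lets the reductions below distinct variable positions be
chosen independently. Hence a step after a `→^{≤ω}` reduction can be moved in front of it, and
transitivity follows by coinduction. The infinitary relation `→∞` then unfolds to finite
sequences of root steps and lifted `→^{≤ω}` reductions in front of a lifting, so the least fixed
point defining `→∞` lies below `→^{≤ω}`. -/

section Terms

variable {Sg : Signature} {X : Type}

lemma Tm.eq_var_or_eq_node (t : Tm Sg X) :
    (∃ x : X, t = Tm.var x) ∨ ∃ (f : Sg.Sym) (args : Fin (Sg.ar f) → Tm Sg X),
      t = Tm.node f args := by
  rcases h : PFunctor.M.dest t with ⟨x | f, args⟩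
  · refine Or.inl ⟨x, ?_⟩
    have hargs : args = Empty.elim := funext fun e => e.elim
    rw [Tm.var, ← hargs, ← h]
    exact (PFunctor.M.mk_dest t).symm
  · refine Or.inr ⟨f, args, ?_⟩
    unfold Tm.node
    rw [← h]
    exact (PFunctor.M.mk_dest t).symm

lemma Tm.eq_of_bisim (B : TRel Sg X)
    (h : ∀ a b, B a b → a = b ∨ (∃ x : X, a = Tm.var x ∧ b = Tm.var x) ∨
      ∃ (f : Sg.Sym) (as bs : Fin (Sg.ar f) → Tm Sg X),
        a = Tm.node f as ∧ b = Tm.node f bs ∧ ∀ i, B (as i) (bs i))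
    {a b : Tm Sg X} (hab : B a b) : a = b := by
  refine PFunctor.M.bisim (fun a b => B a b ∨ a = b) ?_ a b (Or.inl hab)
  rintro a b (hab | rfl)
  · rcases h a b hab with rfl | ⟨x, rfl, rfl⟩ | ⟨f, as, bs, rfl, rfl, hargs⟩
    · exact ⟨_, _, _, rfl, rfl, fun _ => Or.inr rfl⟩
    · exact ⟨Sum.inl x, Empty.elim, Empty.elim, rfl, rfl, fun e => e.elim⟩
    · exact ⟨Sum.inr f, as, bs, rfl, rfl, fun i => Or.inl (hargs i)⟩
  · exact ⟨_, _, _, rfl, rfl, fun _ => Or.inr rfl⟩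

lemma corec_substAux_inr (σ : X → Tm Sg X) (t : Tm Sg X) :
    PFunctor.M.corec (substAux σ) (Sum.inr t) = t := by
  refine PFunctor.M.bisim (fun a b => a = PFunctor.M.corec (substAux σ) (Sum.inr b)) ?_ _ _ rfl
  rintro _ t rfl
  refine ⟨(PFunctor.M.dest t).1,
    fun b => PFunctor.M.corec (substAux σ) (Sum.inr ((PFunctor.M.dest t).2 b)),
    (PFunctor.M.dest t).2, ?_, rfl, fun _ => rfl⟩
  rw [PFunctor.M.dest_corec]
  rfl

lemma subst_var (σ : X → Tm Sg X) (x : X) : subst σ (Tm.var x) = σ x := by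
  have hcopy : (fun b => PFunctor.M.corec (substAux σ) (Sum.inr ((PFunctor.M.dest (σ x)).2 b)))
      = (PFunctor.M.dest (σ x)).2 := funext fun b => corec_substAux_inr σ _
  rw [← PFunctor.M.mk_dest (subst σ (Tm.var x)), subst, PFunctor.M.dest_corec]
  change PFunctor.M.mk ⟨(PFunctor.M.dest (σ x)).1,
    fun b => PFunctor.M.corec (substAux σ) (Sum.inr ((PFunctor.M.dest (σ x)).2 b))⟩ = σ x
  rw [hcopy]
  exact PFunctor.M.mk_dest (σ x)

lemma subst_node (σ : X → Tm Sg X) (f : Sg.Sym) (args : Fin (Sg.ar f) → Tm Sg X) :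
    subst σ (Tm.node f args) = Tm.node f (fun i => subst σ (args i)) := by
  rw [← PFunctor.M.mk_dest (subst σ (Tm.node f args)), subst, PFunctor.M.dest_corec]
  rfl

lemma subst_congr {τ σ : X → Tm Sg X} {t : Tm Sg X}
    (h : ∀ x, Occurs x t → τ x = σ x) : subst τ t = subst σ t := by
  refine Tm.eq_of_bisim (fun a b => ∃ u : Tm Sg X,
    (∀ x, Occurs x u → τ x = σ x) ∧ a = subst τ u ∧ b = subst σ u) ?_ ⟨t, h, rfl, rfl⟩
  rintro _ _ ⟨u, hu, rfl, rfl⟩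
  rcases Tm.eq_var_or_eq_node u with ⟨x, rfl⟩ | ⟨f, args, rfl⟩
  · rw [subst_var, subst_var, hu x (Occurs.here rfl)]
    exact Or.inl rfl
  · refine Or.inr (Or.inr ⟨f, _, _, subst_node τ f args, subst_node σ f args, fun i => ?_⟩)
    exact ⟨args i, fun x hx => hu x (Occurs.deeper i rfl hx), rfl, rfl⟩

lemma exists_occursAt_of_occurs {x : X} {t : Tm Sg X} (h : Occurs x t) :
    ∃ p, OccursAt x p t := by
  induction h with
  | here h => exact ⟨[], OccursAt.here h⟩
  | deeper i h _ ih =>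
    obtain ⟨p, hp⟩ := ih
    exact ⟨(i : ℕ) :: p, OccursAt.deeper i h hp⟩

def IsLinear (l : Tm Sg X) : Prop :=
  ∀ (x : X) (p q : List ℕ), OccursAt x p l → OccursAt x q l → p = q

lemma IsLinear.arg {f : Sg.Sym} {ls : Fin (Sg.ar f) → Tm Sg X}
    (h : IsLinear (Tm.node f ls)) (i : Fin (Sg.ar f)) : IsLinear (ls i) := by
  intro x p q hp hq
  have := h x ((i : ℕ) :: p) ((i : ℕ) :: q) (OccursAt.deeper i rfl hp) (OccursAt.deeper i rfl hq)
  injection this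

lemma IsLinear.eq_of_occurs {f : Sg.Sym} {ls : Fin (Sg.ar f) → Tm Sg X}
    (h : IsLinear (Tm.node f ls)) {x : X} {i j : Fin (Sg.ar f)}
    (hi : Occurs x (ls i)) (hj : Occurs x (ls j)) : i = j := by
  obtain ⟨p, hp⟩ := exists_occursAt_of_occurs hi
  obtain ⟨q, hq⟩ := exists_occursAt_of_occurs hj
  have := h x ((i : ℕ) :: p) ((j : ℕ) :: q) (OccursAt.deeper i rfl hp) (OccursAt.deeper j rfl hq)
  injection this with hij
  exact Fin.val_injective hij

lemma IsLinear.exists_subst_merge {f : Sg.Sym} {ls : Fin (Sg.ar f) → Tm Sg X}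
    (h : IsLinear (Tm.node f ls)) (σ : X → Tm Sg X) (τs : Fin (Sg.ar f) → X → Tm Sg X) :
    ∃ τ : X → Tm Sg X, (∀ i, subst τ (ls i) = subst (τs i) (ls i)) ∧
      ∀ x, τ x = σ x ∨ ∃ i, τ x = τs i x := by
  classical
  refine ⟨fun x => if hx : ∃ i, Occurs x (ls i) then τs hx.choose x else σ x, ?_, ?_⟩
  · intro i
    refine subst_congr fun x hx => ?_
    have hex : ∃ j, Occurs x (ls j) := ⟨i, hx⟩
    simp only [dif_pos hex, h.eq_of_occurs hex.choose_spec hx]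
  · intro x
    by_cases hx : ∃ i, Occurs x (ls i)
    · exact Or.inr ⟨hx.choose, dif_pos hx⟩
    · exact Or.inl (dif_neg hx)

def TRS.IsLeftLinear (R : TRS Sg X) : Prop :=
  ∀ l r, (l, r) ∈ R.rules → IsLinear l

def TRS.HasFiniteLhs (R : TRS Sg X) : Prop :=
  ∀ l r, (l, r) ∈ R.rules → FiniteTm l

end Terms

section Reduction

variable {Sg : Signature} {X : Type} {R : TRS Sg X}

lemma Step.of_rootStep {s t : Tm Sg X} (h : RootStep R s t) : Step R s t :=
  ⟨[], StepAt.here h⟩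

lemma Step.node_update {f : Sg.Sym} (ss : Fin (Sg.ar f) → Tm Sg X) (i : Fin (Sg.ar f))
    {a b : Tm Sg X} (h : Step R a b) :
    Step R (Tm.node f (Function.update ss i a)) (Tm.node f (Function.update ss i b)) := by
  obtain ⟨p, hp⟩ := h
  refine ⟨(i : ℕ) :: p, StepAt.deeper i ?_ fun j hj => ?_⟩
  · rwa [Function.update_self, Function.update_self]
  · rw [Function.update_of_ne hj, Function.update_of_ne hj]

lemma reflTransGen_step_node_update {f : Sg.Sym} (ss : Fin (Sg.ar f) → Tm Sg X)
    (i : Fin (Sg.ar f)) {a b : Tm Sg X} (h : ReflTransGen (Step R) a b) :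
    ReflTransGen (Step R) (Tm.node f (Function.update ss i a))
      (Tm.node f (Function.update ss i b)) :=
  ReflTransGen.lift (fun c => Tm.node f (Function.update ss i c))
    (fun _ _ => Step.node_update ss i) _ _ h

lemma reflTransGen_step_node {f : Sg.Sym} {ss ts : Fin (Sg.ar f) → Tm Sg X}
    (h : ∀ i, ReflTransGen (Step R) (ss i) (ts i)) :
    ReflTransGen (Step R) (Tm.node f ss) (Tm.node f ts) := by
  have key (s : Finset (Fin (Sg.ar f))) :
      ReflTransGen (Step R) (Tm.node f ss) (Tm.node f (s.piecewise ts ss)) := by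
    induction s using Finset.induction with
    | empty => rw [Finset.piecewise_empty]
    | @insert j s hj ih =>
      refine ih.trans ?_
      rw [Finset.piecewise_insert]
      conv_lhs => rw [← Function.update_eq_self j (s.piecewise ts ss)]
      rw [Finset.piecewise_eq_of_notMem _ _ _ hj]
      exact reflTransGen_step_node_update _ j (h j)
  simpa only [Finset.piecewise_univ] using key Finset.univ

lemma ored_iff {s t : Tm Sg X} :
    ored R s t ↔ ∃ m, ReflTransGen (Step R) s m ∧ liftRel (ored R) m t :=
  Iff.of_eq (congrFun₂ (OrderHom.map_gfp (oredHom R)).symm s t)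

lemma le_ored_of_le_oredHom {S : TRel Sg X} (h : S ≤ oredHom R S) : S ≤ ored R :=
  OrderHom.le_gfp (oredHom R) h

lemma ored_of_liftRel {s t : Tm Sg X} (h : liftRel (ored R) s t) : ored R s t :=
  ored_iff.2 ⟨s, ReflTransGen.refl, h⟩

lemma ored_refl (t : Tm Sg X) : ored R t t :=
  ored_of_liftRel (Or.inl rfl)

lemma ored_of_step {s t : Tm Sg X} (h : Step R s t) : ored R s t :=
  ored_iff.2 ⟨t, ReflTransGen.single h, Or.inl rfl⟩

lemma liftRel_comp {P Q S : TRel Sg X} (hP : P ≤ S) (hQ : Q ≤ S) (hPQ : relComp P Q ≤ S)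
    {a b c : Tm Sg X} (hab : liftRel P a b) (hbc : liftRel Q b c) : liftRel S a c := by
  rcases hab with rfl | ⟨f, as, bs, rfl, rfl, hPs⟩
  · exact liftRel_mono hQ _ _ hbc
  rcases hbc with rfl | ⟨g, bs', cs, hb, rfl, hQs⟩
  · exact Or.inr ⟨f, as, bs, rfl, rfl, fun i => hP _ _ (hPs i)⟩
  obtain rfl := node_inj_sym hb
  obtain rfl := node_inj_args hb
  exact Or.inr ⟨f, as, cs, rfl, rfl, fun i => hPQ _ _ ⟨bs i, hPs i, hQs i⟩⟩

lemma ored_subst {τ σ : X → Tm Sg X} (h : ∀ x, ored R (τ x) (σ x)) (r : Tm Sg X) :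
    ored R (subst τ r) (subst σ r) := by
  let S : TRel Sg X := fun u v => ored R u v ∨ ∃ r', u = subst τ r' ∧ v = subst σ r'
  have hS : ored R ≤ S := fun _ _ => Or.inl
  have of_ored {u v : Tm Sg X} (huv : ored R u v) : oredHom R S u v := by
    obtain ⟨m, hum, hmv⟩ := ored_iff.1 huv
    exact ⟨m, hum, liftRel_mono hS _ _ hmv⟩
  refine le_ored_of_le_oredHom (S := S) ?_ _ _ (Or.inr ⟨r, rfl, rfl⟩)
  rintro _ _ (huv | ⟨r', rfl, rfl⟩)
  · exact of_ored huv
  rcases Tm.eq_var_or_eq_node r' with ⟨x, rfl⟩ | ⟨f, args, rfl⟩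
  · rw [subst_var, subst_var]
    exact of_ored (h x)
  · rw [subst_node, subst_node]
    exact ⟨_, ReflTransGen.refl, Or.inr ⟨f, _, _, rfl, rfl, fun i => Or.inr ⟨args i, rfl, rfl⟩⟩⟩

lemma exists_reduct_subst_of_ored_subst {l : Tm Sg X} (hfin : FiniteTm l) (hlin : IsLinear l)
    {σ : X → Tm Sg X} {s : Tm Sg X} (hs : ored R s (subst σ l)) :
    ∃ τ, ReflTransGen (Step R) s (subst τ l) ∧ ∀ x, ored R (τ x) (σ x) := by
  classical
  induction hfin generalizing s with
  | var x hl =>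
    subst hl
    refine ⟨Function.update σ x s, by rw [subst_var, Function.update_self], fun y => ?_⟩
    rcases eq_or_ne y x with rfl | hy
    · rwa [Function.update_self, ← subst_var σ y]
    · rw [Function.update_of_ne hy]
      exact ored_refl _
  | @node l f ls hl _ ih =>
    subst hl
    rw [subst_node] at hs
    obtain ⟨m, hsm, hm⟩ := ored_iff.1 hs
    rcases hm with rfl | ⟨g, as, bs, rfl, hbs, has⟩
    · exact ⟨σ, by rwa [subst_node], fun x => ored_refl _⟩
    obtain rfl := node_inj_sym hbs
    obtain rfl := node_inj_args hbs
    choose τs hτs_red hτs_ored using fun i => ih i (hlin.arg i) (has i)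
    obtain ⟨τ, hτ_args, hτ_ored⟩ := hlin.exists_subst_merge σ τs
    refine ⟨τ, ?_, fun x => ?_⟩
    · rw [subst_node]
      simp only [hτ_args]
      exact hsm.trans (reflTransGen_step_node hτs_red)
    · rcases hτ_ored x with hx | ⟨i, hx⟩
      · rw [hx]
        exact ored_refl _
      · rw [hx]
        exact hτs_ored i x

end Reduction

section Compression

variable {Sg : Signature} {X : Type} {R : TRS Sg X}

lemma swap_ored_stepAt (hlin : R.IsLeftLinear) (hfin : R.HasFiniteLhs)
    {p : List ℕ} {m m' s : Tm Sg X} (hmm' : StepAt (RootStep R) p m m') (hsm : ored R s m) :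
    ∃ u, ReflTransGen (Step R) s u ∧ ored R u m' := by
  induction hmm' generalizing s with
  | here hroot =>
    obtain ⟨l, r, hlr, σ, rfl, rfl⟩ := hroot
    obtain ⟨τ, hsτ, hτσ⟩ := exists_reduct_subst_of_ored_subst (hfin l r hlr) (hlin l r hlr) hsm
    exact ⟨subst τ r, hsτ.tail (Step.of_rootStep ⟨l, r, hlr, τ, rfl, rfl⟩), ored_subst hτσ r⟩
  | @deeper f ss ts i p hstep hrest ih =>
    obtain ⟨m, hsm', hm⟩ := ored_iff.1 hsm
    rcases hm with rfl | ⟨g, as, bs, rfl, hbs, has⟩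
    · exact ⟨Tm.node f ts, hsm'.tail ⟨(i : ℕ) :: p, StepAt.deeper i hstep hrest⟩, ored_refl _⟩
    obtain rfl := node_inj_sym hbs
    obtain rfl := node_inj_args hbs
    obtain ⟨c, hac, hc⟩ := ih (has i)
    refine ⟨Tm.node f (Function.update as i c), ?_, ored_of_liftRel ?_⟩
    · rw [← Function.update_eq_self i as] at hsm'
      exact hsm'.trans (reflTransGen_step_node_update as i hac)
    · refine Or.inr ⟨f, _, ts, rfl, rfl, fun j => ?_⟩
      rcases eq_or_ne j i with rfl | hj
      · rwa [Function.update_self]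
      · rw [Function.update_of_ne hj, ← hrest j hj]
        exact has j

lemma swap_ored_reflTransGen (hlin : R.IsLeftLinear) (hfin : R.HasFiniteLhs)
    {m m' s : Tm Sg X} (hmm' : ReflTransGen (Step R) m m') (hsm : ored R s m) :
    ∃ u, ReflTransGen (Step R) s u ∧ ored R u m' := by
  induction hmm' with
  | refl => exact ⟨s, ReflTransGen.refl, hsm⟩
  | tail _ hstep ih =>
    obtain ⟨u, hsu, hu⟩ := ih
    obtain ⟨p, hp⟩ := hstep
    obtain ⟨v, huv, hv⟩ := swap_ored_stepAt hlin hfin hp hu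
    exact ⟨v, hsu.trans huv, hv⟩

lemma ored_trans (hlin : R.IsLeftLinear) (hfin : R.HasFiniteLhs)
    {s m t : Tm Sg X} (hsm : ored R s m) (hmt : ored R m t) : ored R s t := by
  let S : TRel Sg X := relComp (ored R) (ored R)
  refine le_ored_of_le_oredHom (S := S) ?_ _ _ ⟨m, hsm, hmt⟩
  rintro a c ⟨b, hab, hbc⟩
  obtain ⟨m₁, hbm₁, hm₁c⟩ := ored_iff.1 hbc
  obtain ⟨u, hau, hum₁⟩ := swap_ored_reflTransGen hlin hfin hbm₁ hab
  obtain ⟨u₁, huu₁, hu₁m₁⟩ := ored_iff.1 hum₁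
  refine ⟨u₁, hau.trans huu₁, liftRel_comp ?_ ?_ le_rfl hu₁m₁ hm₁c⟩
  · exact fun x y hxy => ⟨y, hxy, ored_refl y⟩
  · exact fun x y hxy => ⟨x, ored_refl x, hxy⟩

lemma ored_of_reflTransGen (hlin : R.IsLeftLinear) (hfin : R.HasFiniteLhs) {s t : Tm Sg X}
    (h : ReflTransGen (fun a b => RootStep R a b ∨ liftRel (ored R) a b) s t) :
    ored R s t := by
  induction h with
  | refl => exact ored_refl _
  | tail _ hstep ih =>
    refine ored_trans hlin hfin ih ?_
    rcases hstep with h | h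
    · exact ored_of_step (Step.of_rootStep h)
    · exact ored_of_liftRel h

lemma le_ored_of_le_relComp (hlin : R.IsLeftLinear) (hfin : R.HasFiniteLhs) {S : TRel Sg X}
    (h : S ≤ relComp (ored R) (liftRel S)) : S ≤ ored R := by
  let V : TRel Sg X := relComp (ored R) (liftRel S)
  refine fun a c hac => le_ored_of_le_oredHom (S := V) ?_ a c (h a c hac)
  rintro a c ⟨b, hab, hbc⟩
  obtain ⟨u, hau, hub⟩ := ored_iff.1 hab
  refine ⟨u, hau, liftRel_comp (fun x y hxy => ⟨y, hxy, Or.inl rfl⟩) h ?_ hub hbc⟩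
  rintro x z ⟨y, hxy, hyz⟩
  obtain ⟨w, hyw, hwz⟩ := h y z hyz
  exact ⟨w, ored_trans hlin hfin hxy hyw, hwz⟩

end Compression

theorem compression_general (Sg : Signature) (X : Type) (R : TRS Sg X)
    (hlinear : ∀ l r, (l, r) ∈ R.rules →
      ∀ (x : X) (p q : List ℕ), OccursAt x p l → OccursAt x q l → p = q)
    (hfin : ∀ l r, (l, r) ∈ R.rules → FiniteTm l) :
    ∀ s t : Tm Sg X, ired R s t → ored R s t := by
  have h_prefixed : iredHom R (ored R) ≤ ored R := by
    refine le_ored_of_le_relComp hlinear hfin fun a c hac => ?_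
    obtain ⟨b, hab, hbc⟩ := (congrFun₂ (OrderHom.map_gfp (iredInnerHom R (ored R))) a c).mpr hac
    exact ⟨b, ored_of_reflTransGen hlinear hfin hab, hbc⟩
  exact OrderHom.lfp_le (iredHom R) h_prefixed

/-- **Compression Lemma.** Let `R` be a left-linear TRS (no variable
occurs at two distinct positions of a left-hand side) all of whose left-hand sides
are finite terms. Then every infinitary reduction can be compressed to length at
most `ω`: `s →∞ t` implies `s →^{≤ω} t`. -/
theorem compression (Sg : Signature) (X : Type) [Infinite X] (R : TRS Sg X)
    (hlinear : ∀ l r, (l, r) ∈ R.rules →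
      ∀ (x : X) (p q : List ℕ), OccursAt x p l → OccursAt x q l → p = q)
    (hfin : ∀ l r, (l, r) ∈ R.rules → FiniteTm l) :
    ∀ s t : Tm Sg X, ired R s t → ored R s t :=
  compression_general Sg X R hlinear hfin
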